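/- Let R > 1 be an integer, and consider a two-node network with constraints L₂ = U₂ = R, L₁ = 2, U₁ = R − 1. A strictly tight wake-up schedule (periods n₁ ∈ [2, R−1], n₂ = R, with infinitely many rendezvous and lcm(n₁,n₂) ≤ R) exists if and only if R is composite; moreover, in any such schedule n₁ is a proper divisor of R. -/

import Mathlib

/-! Since `R ∣ lcm n₁ R`, the bound `lcm n₁ R ≤ R` holds exactly when `n₁ ∣ R`. So the strictly
tight schedules are the proper divisors `n₁` of `R` (any equal phases will do), and these exist
exactly when `R` is composite. -/

theorem Nat.lcm_le_right_iff_dvd {a b : ℕ} (ha : a ≠ 0) (hb : b ≠ 0) :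
    Nat.lcm a b ≤ b ↔ a ∣ b := by
  rw [← Nat.lcm_eq_right_iff_dvd]
  refine ⟨fun h => le_antisymm h ?_, le_of_eq⟩
  exact Nat.le_of_dvd (Nat.pos_of_ne_zero (Nat.lcm_ne_zero ha hb)) (Nat.dvd_lcm_right a b)

theorem stmt_8 (R : ℕ) (hR : 1 < R) :
    ((∃ n₁ : ℕ, ∃ a₁ a₂ : ℤ,
        2 ≤ n₁ ∧ n₁ ≤ R - 1 ∧
        (Nat.gcd n₁ R : ℤ) ∣ a₁ - a₂ ∧
        Nat.lcm n₁ R ≤ R) ↔ ¬ R.Prime) ∧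
    (∀ n₁ : ℕ, ∀ a₁ a₂ : ℤ,
        2 ≤ n₁ → n₁ ≤ R - 1 →
        (Nat.gcd n₁ R : ℤ) ∣ a₁ - a₂ →
        Nat.lcm n₁ R ≤ R →
        n₁ ∣ R ∧ 1 < n₁ ∧ n₁ < R) := by
  have proper_divisor (n₁ : ℕ) (h2 : 2 ≤ n₁) (hle : n₁ ≤ R - 1) (hlcm : Nat.lcm n₁ R ≤ R) :
      n₁ ∣ R ∧ 1 < n₁ ∧ n₁ < R :=
    ⟨(Nat.lcm_le_right_iff_dvd (by omega) (by omega)).mp hlcm, by omega, by omega⟩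
  refine ⟨⟨?_, fun hcomposite => ?_⟩, fun n₁ _ _ h2 hle _ hlcm => proper_divisor n₁ h2 hle hlcm⟩
  · rintro ⟨n₁, -, -, h2, hle, -, hlcm⟩
    obtain ⟨hdvd, h1, hlt⟩ := proper_divisor n₁ h2 hle hlcm
    exact Nat.not_prime_of_dvd_of_ne hdvd (by omega) (by omega)
  · obtain ⟨d, hd, h2, hlt⟩ := Nat.exists_dvd_of_not_prime2 hR hcomposite
    exact ⟨d, 0, 0, h2, by omega, by simp,
      (Nat.lcm_le_right_iff_dvd (by omega) (by omega)).mpr hd⟩
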